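/- arXiv:1312.7533 — 2 statements merged into one kernel-verified Lean document; each statement's English description precedes it below -/
import Mathlib

section
/- For all real numbers s, t: | s_+^{3/2} − t_+^{3/2} − (3/2)·t_+^{1/2}·(s − t) | ≤ |s − t|^{3/2}, where x_+ = max(x, 0). -/
/-!
Write `u = √s₊`, `v = √t₊`. For `s, t ≥ 0` the remainder is
`u³ - v³ - (3/2) v (u² - v²) = (u - v)² (u + v/2)`, which is nonnegative and, since
`|u - v| ≤ u + v`, at most `|u - v|^{3/2} (u + v)^{3/2} = |s - t|^{3/2}`.
For `s ≤ 0 ≤ t` the same factorisation, applied to `w = √(t - s) ≥ v` in place of `u`,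
gives `0 ≤ (3/2) v w² - v³ = w³ - (w - v)² (w + v/2) ≤ w³`.
For `t ≤ 0` the remainder is `s₊^{3/2}`.
-/

open Real

noncomputable def sqrtTaylorRemainder (s t : ℝ) : ℝ :=
  √(max s 0) ^ 3 - √(max t 0) ^ 3 - 3 / 2 * √(max t 0) * (s - t)

lemma rpow_three_halves_eq_sqrt_pow {x : ℝ} (hx : 0 ≤ x) : x ^ ((3 : ℝ) / 2) = √x ^ 3 := by
  rw [← rpow_natCast, sqrt_eq_rpow, ← rpow_mul hx]
  norm_num

lemma le_sqrt_pow_three {x d : ℝ} (hd : 0 ≤ d) (h : x ^ 2 ≤ d ^ 3) : x ≤ √d ^ 3 := by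
  refine (abs_le_of_sq_le_sq' ?_ (by positivity)).2
  rwa [← pow_mul, mul_comm, pow_mul, sq_sqrt hd]

lemma cube_sub_cube_sub_tangent (u v : ℝ) :
    u ^ 3 - v ^ 3 - 3 / 2 * v * (u ^ 2 - v ^ 2) = (u - v) ^ 2 * (u + v / 2) := by
  ring

lemma sq_mul_le_abs_sq_sub_sq_pow_three {u v : ℝ} (hu : 0 ≤ u) (hv : 0 ≤ v) :
    ((u - v) ^ 2 * (u + v / 2)) ^ 2 ≤ |u ^ 2 - v ^ 2| ^ 3 := by
  have huv : |u - v| ≤ u + v := abs_sub_le_iff.2 ⟨by linarith, by linarith⟩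
  calc ((u - v) ^ 2 * (u + v / 2)) ^ 2 = |u - v| ^ 3 * |u - v| * (u + v / 2) ^ 2 := by
        rw [← sq_abs (u - v)]; ring
    _ ≤ |u - v| ^ 3 * (u + v) * (u + v) ^ 2 := by gcongr; linarith
    _ = |u ^ 2 - v ^ 2| ^ 3 := by
        rw [show u ^ 2 - v ^ 2 = (u - v) * (u + v) by ring, abs_mul,
          abs_of_nonneg (by linarith : 0 ≤ u + v)]
        ring

lemma sqrtTaylorRemainder_bounds_of_nonneg {s t : ℝ} (hs : 0 ≤ s) (ht : 0 ≤ t) :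
    0 ≤ sqrtTaylorRemainder s t ∧ sqrtTaylorRemainder s t ≤ √|s - t| ^ 3 := by
  have hu := sq_sqrt hs
  have hv := sq_sqrt ht
  have hR : sqrtTaylorRemainder s t = (√s - √t) ^ 2 * (√s + √t / 2) := by
    rw [sqrtTaylorRemainder, max_eq_left hs, max_eq_left ht, ← cube_sub_cube_sub_tangent, hu, hv]
  rw [hR]
  refine ⟨by positivity, le_sqrt_pow_three (abs_nonneg _) ?_⟩
  simpa only [hu, hv] using sq_mul_le_abs_sq_sub_sq_pow_three (sqrt_nonneg s) (sqrt_nonneg t)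

lemma sqrtTaylorRemainder_bounds_of_nonpos_of_nonneg {s t : ℝ} (hs : s ≤ 0) (ht : 0 ≤ t) :
    0 ≤ sqrtTaylorRemainder s t ∧ sqrtTaylorRemainder s t ≤ √|s - t| ^ 3 := by
  set v := √t
  set w := √|s - t|
  have hw : w ^ 2 = t - s := by
    rw [sq_sqrt (abs_nonneg _), abs_sub_comm, abs_of_nonneg (by linarith)]
  have hvw : v ≤ w := sqrt_le_sqrt (by rw [abs_sub_comm, abs_of_nonneg (by linarith)]; linarith)
  have hR : sqrtTaylorRemainder s t = 3 / 2 * v * w ^ 2 - v ^ 3 := by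
    rw [sqrtTaylorRemainder, max_eq_right hs, max_eq_left ht, sqrt_zero, hw]
    ring
  have hv : 0 ≤ v := sqrt_nonneg t
  have hfactor := cube_sub_cube_sub_tangent w v
  rw [hR]
  constructor
  · nlinarith [pow_le_pow_left₀ hv hvw 2]
  · nlinarith [sq_nonneg (w - v)]

lemma sqrtTaylorRemainder_bounds_of_nonpos {s t : ℝ} (ht : t ≤ 0) :
    0 ≤ sqrtTaylorRemainder s t ∧ sqrtTaylorRemainder s t ≤ √|s - t| ^ 3 := by
  have hR : sqrtTaylorRemainder s t = √(max s 0) ^ 3 := by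
    rw [sqrtTaylorRemainder, max_eq_right ht, sqrt_zero]
    ring
  rw [hR]
  refine ⟨by positivity, pow_le_pow_left₀ (sqrt_nonneg _) (sqrt_le_sqrt ?_) 3⟩
  exact max_le (by linarith [le_abs_self (s - t)]) (abs_nonneg _)

theorem stmt_12 (s t : ℝ) :
    |max s 0 ^ ((3 : ℝ)/2) - max t 0 ^ ((3 : ℝ)/2)
        - 3/2 * max t 0 ^ ((1 : ℝ)/2) * (s - t)| ≤ |s - t| ^ ((3 : ℝ)/2) := by
  have hbounds : 0 ≤ sqrtTaylorRemainder s t ∧ sqrtTaylorRemainder s t ≤ √|s - t| ^ 3 := by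
    rcases le_total t 0 with ht | ht
    · exact sqrtTaylorRemainder_bounds_of_nonpos ht
    rcases le_total 0 s with hs | hs
    · exact sqrtTaylorRemainder_bounds_of_nonneg hs ht
    · exact sqrtTaylorRemainder_bounds_of_nonpos_of_nonneg hs ht
  rw [sqrtTaylorRemainder] at hbounds
  rw [rpow_three_halves_eq_sqrt_pow (le_max_right s 0), rpow_three_halves_eq_sqrt_pow
    (le_max_right t 0), ← sqrt_eq_rpow, rpow_three_halves_eq_sqrt_pow (abs_nonneg _),
    abs_of_nonneg hbounds.1]
  exact hbounds.2
end

section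
/- Let L > 0, ε > 0, b > 0, s > 0, and let f : [0, L] → ℝ be continuously differentiable with f′(t) ≥ ε for all t ∈ [0, L]. Then the Lebesgue measure of the set { t ∈ [0, L] : ∃ j ∈ ℤ, |f(t) − 2jb| ≤ s } is at most (2s/ε)·( (f(L) − f(0))/(2b) + 1 ). -/
open MeasureTheory Set Metric

/-! Since `f' ≥ ε`, the change of variables formula gives `ε · |E| ≤ |f '' E|` for the set `E` in
question. The image lies in `[f 0, f L]` and within distance `s` of `2bℤ`, i.e. in the preimage of
a closed `s`-ball of the circle `ℝ ⧸ 2bℤ`; every period `(t, t + 2b]` meets that preimage in measure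
at most `2s`, and `⌈(f L - f 0) / (2b)⌉` periods cover `[f 0, f L]`. -/

theorem ofReal_mul_volume_le_volume_image {f f' : ℝ → ℝ} {s : Set ℝ} {ε : ℝ}
    (hs : MeasurableSet s) (hf' : ∀ x ∈ s, HasDerivWithinAt f (f' x) s x) (hf : InjOn f s)
    (hε : ∀ x ∈ s, ε ≤ |f' x|) :
    ENNReal.ofReal ε * volume s ≤ volume (f '' s) := by
  calc ENNReal.ofReal ε * volume s = ∫⁻ _ in s, ENNReal.ofReal ε := (setLIntegral_const s _).symm
    _ ≤ ∫⁻ x in s, ENNReal.ofReal |f' x| * 1 :=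
        setLIntegral_mono' hs fun x hx => by simpa using ENNReal.ofReal_le_ofReal (hε x hx)
    _ = volume (f '' s) := by
        rw [← lintegral_image_eq_lintegral_abs_deriv_mul hs hf' hf (fun _ => 1), setLIntegral_one]

theorem strictMonoOn_of_derivWithin_pos {D : Set ℝ} (hD : Convex ℝ D) {f : ℝ → ℝ}
    (hf : DifferentiableOn ℝ f D) (hf' : ∀ x ∈ interior D, 0 < derivWithin f D x) :
    StrictMonoOn f D :=
  strictMonoOn_of_hasDerivWithinAt_pos hD hf.continuousOn
    (fun x hx => ((hf x (interior_subset hx)).hasDerivWithinAt).mono interior_subset) hf'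

namespace AddCircle

variable (T : ℝ) [Fact (0 < T)] (x : AddCircle T)

theorem volume_preimage_closedBall_inter_Ioc_le (s t : ℝ) :
    volume ((↑) ⁻¹' closedBall x s ∩ Ioc t (t + T)) ≤ ENNReal.ofReal (2 * s) := by
  rw [← add_projection_respects_measure T t measurableSet_closedBall, volume_closedBall]
  exact ENNReal.ofReal_le_ofReal (min_le_right _ _)

theorem volume_preimage_closedBall_inter_Ioc_le_mul (s t : ℝ) (n : ℕ) :
    volume ((↑) ⁻¹' closedBall x s ∩ Ioc t (t + n * T)) ≤ n * ENNReal.ofReal (2 * s) := by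
  induction n with
  | zero => simp
  | succ n ih =>
    have hT : 0 < T := Fact.out
    rw [Nat.cast_succ, add_one_mul, ← add_assoc,
      ← Ioc_union_Ioc_eq_Ioc (b := t + n * T) (le_add_of_nonneg_right (by positivity)) (by linarith),
      inter_union_distrib_left]
    calc _ ≤ _ := measure_union_le _ _
      _ ≤ n * ENNReal.ofReal (2 * s) + ENNReal.ofReal (2 * s) :=
          add_le_add ih (volume_preimage_closedBall_inter_Ioc_le T x s _)
      _ = _ := by push_cast; ring

theorem volume_preimage_closedBall_inter_Icc_le {s : ℝ} (hs : 0 ≤ s) (a b : ℝ) :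
    volume ((↑) ⁻¹' closedBall x s ∩ Icc a b) ≤ ENNReal.ofReal (2 * s * ((b - a) / T + 1)) := by
  rcases lt_or_ge b a with hba | hab
  · simp [Icc_eq_empty_of_lt hba]
  have hT : 0 < T := Fact.out
  set n := ⌈(b - a) / T⌉₊
  have hn : (n : ℝ) < (b - a) / T + 1 := Nat.ceil_lt_add_one (div_nonneg (sub_nonneg.2 hab) hT.le)
  have hbn : b ≤ a + n * T := by
    have := Nat.le_ceil ((b - a) / T)
    rw [div_le_iff₀ hT] at this
    linarith
  calc volume ((↑) ⁻¹' closedBall x s ∩ Icc a b)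
      = volume ((↑) ⁻¹' closedBall x s ∩ Ioc a b) :=
        measure_congr (ae_eq_refl _ |>.inter Ioc_ae_eq_Icc.symm)
    _ ≤ volume ((↑) ⁻¹' closedBall x s ∩ Ioc a (a + n * T)) :=
        measure_mono (inter_subset_inter_right _ (Ioc_subset_Ioc_right hbn))
    _ ≤ n * ENNReal.ofReal (2 * s) := volume_preimage_closedBall_inter_Ioc_le_mul T x s a n
    _ = ENNReal.ofReal (n * (2 * s)) := by rw [ENNReal.ofReal_mul (by positivity)]; simp
    _ ≤ ENNReal.ofReal (2 * s * ((b - a) / T + 1)) :=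
        ENNReal.ofReal_le_ofReal (by nlinarith)

end AddCircle

theorem stmt_14_general (L ε b s : ℝ) (hε : 0 < ε) (hb : 0 < b) (hs : 0 < s)
    (f : ℝ → ℝ) (hf : ContDiffOn ℝ 1 f (Set.Icc 0 L))
    (hf' : ∀ t ∈ Set.Icc 0 L, ε ≤ derivWithin f (Set.Icc 0 L) t) :
    volume {t : ℝ | t ∈ Set.Icc 0 L ∧ ∃ j : ℤ, |f t - 2 * j * b| ≤ s} ≤
      ENNReal.ofReal ((2 * s / ε) * ((f L - f 0) / (2 * b) + 1)) := by
  have : Fact (0 < 2 * b) := ⟨by positivity⟩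
  set W := ((↑) : ℝ → AddCircle (2 * b)) ⁻¹' closedBall ((0 : ℝ) : AddCircle (2 * b)) s
  have hW : ∀ y, y ∈ W ↔ ∃ j : ℤ, |y - 2 * j * b| ≤ s := fun y => by
    simp [W, AddCircle.coe_real_preimage_closedBall_eq_iUnion, Real.dist_eq, mul_comm, mul_left_comm]
  have hdiff : DifferentiableOn ℝ f (Icc 0 L) := hf.differentiableOn one_ne_zero
  have hmono : StrictMonoOn f (Icc 0 L) := strictMonoOn_of_derivWithin_pos (convex_Icc 0 L) hdiff
    fun x hx => hε.trans_le (hf' x (interior_subset hx))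
  set E := Icc 0 L ∩ f ⁻¹' W
  have hE_eq : {t : ℝ | t ∈ Set.Icc 0 L ∧ ∃ j : ℤ, |f t - 2 * j * b| ≤ s} = E := by
    ext t; simp [E, hW]
  have hE_meas : MeasurableSet E := (hdiff.continuousOn.preimage_isClosed_of_isClosed isClosed_Icc
    (isClosed_closedBall.preimage (AddCircle.continuous_mk' (2 * b)))).measurableSet
  have himage : f '' E ⊆ W ∩ Icc (f 0) (f L) := by
    rintro _ ⟨t, ⟨ht, htW⟩, rfl⟩
    exact ⟨htW, hmono.monotoneOn ⟨le_rfl, ht.1.trans ht.2⟩ ht ht.1,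
      hmono.monotoneOn ht ⟨ht.1.trans ht.2, le_rfl⟩ ht.2⟩
  have hexp := ofReal_mul_volume_le_volume_image hE_meas
    (fun x hx => (hdiff x hx.1).hasDerivWithinAt.mono inter_subset_left)
    (hmono.injOn.mono inter_subset_left) (fun x hx => (hf' x hx.1).trans (le_abs_self _))
  have hcount := AddCircle.volume_preimage_closedBall_inter_Icc_le (2 * b) (0 : ℝ) hs.le (f 0) (f L)
  rw [hE_eq]
  refine (ENNReal.mul_le_mul_iff_right (ENNReal.ofReal_pos.2 hε).ne' ENNReal.ofReal_ne_top).1 ?_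
  rw [← ENNReal.ofReal_mul hε.le, ← mul_assoc, mul_div_cancel₀ _ hε.ne']
  exact hexp.trans ((measure_mono himage).trans hcount)

theorem stmt_14 (L ε b s : ℝ) (hL : 0 < L) (hε : 0 < ε) (hb : 0 < b) (hs : 0 < s)
    (f : ℝ → ℝ) (hf : ContDiffOn ℝ 1 f (Set.Icc 0 L))
    (hf' : ∀ t ∈ Set.Icc 0 L, ε ≤ derivWithin f (Set.Icc 0 L) t) :
    volume {t : ℝ | t ∈ Set.Icc 0 L ∧ ∃ j : ℤ, |f t - 2 * j * b| ≤ s} ≤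
      ENNReal.ofReal ((2 * s / ε) * ((f L - f 0) / (2 * b) + 1)) :=
  stmt_14_general L ε b s hε hb hs f hf hf'
end
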